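/- arXiv:0707.3947 — 2 statements merged into one kernel-verified Lean document; each statement's English description precedes it below -/
import Mathlib

section
/- On X = F(V), the intersection numbers of the classes H = c_1(U*)|_X and Δ = c_2(U*)|_X are: H^4 = 108, H^2·Δ = 45, and Δ^2 = 27. -/
/-
STATEMENT 7: On the variety of lines `X = F(V)` of a smooth cubic fourfold
`V ⊂ P⁵`, with `H = c₁(U*)|_X` the Plücker hyperplane class and
`Δ = c₂(U*)|_X` the class of lines in a fixed hyperplane, the intersection
numbers are `H⁴ = 108`, `H²·Δ = 45`, `Δ² = 27`.

We model the (even) cohomology ring of the Grassmannian `G(1,5)` abstractly: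
`σ₁ = c₁(U*)`, `σ₂ = c₂(U*)` are the Schubert classes, `deg` is integration
over `G(1,5)` and `[X] = c₄(S³U*) = 9σ₂(2σ₁² + σ₂)`.  Intersection numbers on
`X` are `deg (α · [X])`.  The context facts are the degrees of the
sub-Grassmannians: `deg(σ₁⁶σ₂) = deg G(1,4) = 5`, `deg(σ₁⁴σ₂²) = deg G(1,3) = 2`,
`deg(σ₁²σ₂³) = 1`, `deg(σ₂⁴) = 1`.
-/
structure GrassmannianCohomology where
  /-- the even cohomology ring `H^*(G(1,5), ℚ)` -/
  A : Type*
  [commRing : CommRing A]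
  [alg : Algebra ℚ A]
  /-- the Schubert class `σ₁ = c₁(U*)` (lines meeting a fixed `P³`) -/
  σ₁ : A
  /-- the Schubert class `σ₂ = c₂(U*)` (lines inside a fixed hyperplane) -/
  σ₂ : A
  /-- integration over the 8-dimensional Grassmannian `G(1,5)` -/
  deg : A →ₗ[ℚ] ℚ
  /-- `deg (σ₁⁶ σ₂) = deg G(1,4) = 5` -/
  hG14 : deg (σ₁ ^ 6 * σ₂) = 5
  /-- `deg (σ₁⁴ σ₂²) = deg G(1,3) = 2` -/
  hG13 : deg (σ₁ ^ 4 * σ₂ ^ 2) = 2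
  /-- `deg (σ₁² σ₂³) = deg G(1,2) = 1` -/
  hG12 : deg (σ₁ ^ 2 * σ₂ ^ 3) = 1
  /-- `deg (σ₂⁴) = 1` -/
  hG11 : deg (σ₂ ^ 4) = 1

attribute [instance] GrassmannianCohomology.commRing GrassmannianCohomology.alg

/-!
Expanding `[X] = 9σ₂(2σ₁² + σ₂)` writes each intersection number as `18·a + 9·b` for two
consecutive top-degree Schubert numbers `a, b` among `5, 2, 1, 1`:
`18·5 + 9·2 = 108`, `18·2 + 9·1 = 45`, `18·1 + 9·1 = 27`.
-/

theorem LinearMap.map_mul_nine_mul_two_mul_sq_add {A : Type*} [CommRing A] [Algebra ℚ A]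
    (f : A →ₗ[ℚ] ℚ) (α s t : A) :
    f (α * (9 * t * (2 * s ^ 2 + t))) = 18 * f (α * s ^ 2 * t) + 9 * f (α * t ^ 2) := by
  have h : α * (9 * t * (2 * s ^ 2 + t)) = (18 : ℚ) • (α * s ^ 2 * t) + (9 : ℚ) • (α * t ^ 2) := by
    simp only [Algebra.smul_def, map_ofNat]
    ring
  rw [h, map_add, map_smul, map_smul, smul_eq_mul, smul_eq_mul]

/-- `H⁴ = 108`, `H²Δ = 45`, `Δ² = 27` on `X = F(V)`, where the intersection
number of a class `α` of `G(1,5)` restricted to `X` is `deg (α · [X])` with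
`[X] = c₄(S³U*) = 9σ₂(2σ₁² + σ₂)`, `H = σ₁|_X` and `Δ = σ₂|_X`. -/
theorem intersection_numbers_on_F_V (G : GrassmannianCohomology)
    (Xcls : G.A) (hX : Xcls = 9 * G.σ₂ * (2 * G.σ₁ ^ 2 + G.σ₂)) :
    G.deg (G.σ₁ ^ 4 * Xcls) = 108 ∧
    G.deg (G.σ₁ ^ 2 * G.σ₂ * Xcls) = 45 ∧
    G.deg (G.σ₂ ^ 2 * Xcls) = 27 := by
  subst hX
  simp only [LinearMap.map_mul_nine_mul_two_mul_sq_add]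
  refine ⟨?_, ?_, ?_⟩
  · rw [← pow_add, G.hG14, G.hG13]
    norm_num
  · rw [show G.σ₁ ^ 2 * G.σ₂ * G.σ₁ ^ 2 * G.σ₂ = G.σ₁ ^ 4 * G.σ₂ ^ 2 by ring,
      show G.σ₁ ^ 2 * G.σ₂ * G.σ₂ ^ 2 = G.σ₁ ^ 2 * G.σ₂ ^ 3 by ring, G.hG13, G.hG12]
    norm_num
  · rw [show G.σ₂ ^ 2 * G.σ₁ ^ 2 * G.σ₂ = G.σ₁ ^ 2 * G.σ₂ ^ 3 by ring, ← pow_add, G.hG12, G.hG11]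
    norm_num
end

section
/- The action of f on cohomology is given by: f*H = 7H, f*H^2 = 4H^2 + 45Δ, f*Δ = 31Δ, and f*H^3 = 28H^3. -/
/-
STATEMENT 14: The action of `f` on cohomology is: `f*H = 7H`,
`f*H² = 4H² + 45Δ`, `f*Δ = 31Δ`, `f*H³ = 28H³`.

Here `f*α := π_*(g*α)` for the resolution `π : X̃ → X` (blow-up of the
indeterminacy surface `S`, exceptional divisor `E`) and `g = f ∘ π`.
The context facts are recorded: `g*H = 7π*H - 3E`, the projection formula
and the push-forward identities `π_*1 = 1`, `π_*E = 0`, `π_*E² = -[S]` with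
`[S] = 5(H² - Δ)`, `π_*(π*H·E²) = -(35/12)H³`, `π_*E³ = 27HΔ - 20H³`, and
the Chern class identities for `P` and `g*U_X` coming from the exact
sequences `0 → π*U_X → P → M*(E) → 0` and `0 → g*U_X → P → M^{⊗2}(-2E) → 0`
with `M = O(2H)` (so that `g*Δ = c₂(g*U_X)`, `g*H = -c₁(g*U_X)`).
-/
structure PullbackComputationSetup where
  /-- `H^*(X, ℚ)` -/
  A : Type*
  /-- `H^*(X̃, ℚ)` -/
  B : Type*
  [ringA : CommRing A] [algA : Algebra ℚ A]
  [ringB : CommRing B] [algB : Algebra ℚ B]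
  /-- pull-back `π*` -/
  πpull : A →+* B
  /-- push-forward `π_*` -/
  πpush : B →ₗ[ℚ] A
  /-- pull-back `g*` along `g = f ∘ π` -/
  gpull : A →+* B
  /-- the Plücker class -/
  H : A
  /-- `Δ = c₂(U*_X)` -/
  Δ : A
  /-- the exceptional divisor class -/
  E : B
  /-- `c₁(P)` and `c₂(P)` for the rank-3 bundle `P` of tangent planes -/
  c1P : B
  c2P : B
  /-- projection formula -/
  hproj : ∀ (a : A) (b : B), πpush (πpull a * b) = a * πpush b
  /-- `π` is birational: `π_*1 = 1` -/
  hπ1 : πpush 1 = 1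
  /-- `π_*E = 0` -/
  hE1 : πpush E = 0
  /-- `π_*E² = -[S] = -5(H² - Δ)` -/
  hE2 : πpush (E ^ 2) = -(5 * (H ^ 2 - Δ))
  /-- `π_*(π*H·E²) = -(35/12)H³` -/
  hHE2 : πpush (πpull H * E ^ 2) = -(((35 : ℚ) / 12) • H ^ 3)
  /-- `π_*E³ = 27HΔ - 20H³` -/
  hE3 : πpush (E ^ 3) = 27 * (H * Δ) - 20 * H ^ 3
  /-- `g*H = 7π*H - 3E` -/
  hgH : gpull H = 7 * πpull H - 3 * E
  /-- Whitney for `0 → π*U_X → P → M*(E) → 0`: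
  `c₁(P) = -π*H + (E - 2π*H)` -/
  hc1P : c1P = -(πpull H) + (E - 2 * πpull H)
  /-- and `c₂(P) = π*Δ + (-π*H)·(E - 2π*H) = π*Δ - π*H·E + 2π*H²` -/
  hc2P : c2P = πpull Δ - πpull H * E + 2 * πpull H ^ 2
  /-- Whitney for `0 → g*U_X → P → M^{⊗2}(-2E) → 0`, degree 1 (with
  `c₁(g*U_X) = -g*H`): `-g*H + (4π*H - 2E) = c₁(P)` -/
  hseq2a : -(gpull H) + (4 * πpull H - 2 * E) = c1P
  /-- Whitney in degree 2 (with `c₂(g*U_X) = g*Δ`):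
  `g*Δ + (-g*H)·(4π*H - 2E) = c₂(P)` -/
  hseq2b : gpull Δ + (-(gpull H)) * (4 * πpull H - 2 * E) = c2P

attribute [instance] PullbackComputationSetup.ringA PullbackComputationSetup.algA
  PullbackComputationSetup.ringB PullbackComputationSetup.algB

/-!
The classes `g*H`, `g*H²`, `g*Δ`, `g*H³` are polynomials in `E` whose coefficients are pulled
back from `X`: `g*H = 7π*H - 3E` is given, and `g*Δ` is read off from the two Whitney
relations for `P`. By the projection formula, `π_*` of such a polynomial only sees `π_*1`,
`π_*E`, `π_*E²`, `π_*E³`. For `H³` one further needs the relation `12HΔ = 5H³`, which comes from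
computing `π_*(π*H·E²)` both directly and through the projection formula.
-/

namespace PullbackComputationSetup

variable (s : PullbackComputationSetup)

def polyE (a₀ a₁ a₂ a₃ : s.A) : s.B :=
  s.πpull a₀ + s.πpull a₁ * s.E + s.πpull a₂ * s.E ^ 2 + s.πpull a₃ * s.E ^ 3

theorem πpush_πpull (a : s.A) : s.πpush (s.πpull a) = a := by
  simpa [s.hπ1] using s.hproj a 1

theorem πpush_polyE (a₀ a₁ a₂ a₃ : s.A) :
    s.πpush (s.polyE a₀ a₁ a₂ a₃) =
      a₀ - 5 * a₂ * (s.H ^ 2 - s.Δ) + a₃ * (27 * (s.H * s.Δ) - 20 * s.H ^ 3) := by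
  simp only [polyE, map_add, s.hproj, πpush_πpull, s.hE1, s.hE2, s.hE3]
  ring

theorem twelve_mul_H_mul_Δ : 12 * (s.H * s.Δ) = 5 * s.H ^ 3 := by
  have hHE2 : s.H * -(5 * (s.H ^ 2 - s.Δ)) = -(algebraMap ℚ s.A (35 / 12) * s.H ^ 3) := by
    rw [← s.hE2, ← s.hproj, s.hHE2, Algebra.smul_def]
  have h₁ : algebraMap ℚ s.A (12 / 5) * 5 = 12 := by
    rw [← map_ofNat (algebraMap ℚ s.A) 5, ← map_mul]; norm_num [map_ofNat]
  have h₂ : algebraMap ℚ s.A (12 / 5) * algebraMap ℚ s.A (35 / 12) = 7 := by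
    rw [← map_ofNat (algebraMap ℚ s.A) 7, ← map_mul]; norm_num
  linear_combination algebraMap ℚ s.A (12 / 5) * hHE2 - (s.H * s.Δ - s.H ^ 3) * h₁ - s.H ^ 3 * h₂

theorem gpull_H : s.gpull s.H = s.polyE (7 * s.H) (-3) 0 0 := by
  simp only [polyE, s.hgH, map_mul, map_ofNat, map_neg, map_zero]
  ring

theorem gpull_H_sq : s.gpull (s.H ^ 2) = s.polyE (49 * s.H ^ 2) (-42 * s.H) 9 0 := by
  simp only [polyE, map_pow, s.hgH, map_mul, map_ofNat, map_neg, map_zero]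
  ring

theorem gpull_H_cube :
    s.gpull (s.H ^ 3) = s.polyE (343 * s.H ^ 3) (-441 * s.H ^ 2) (189 * s.H) (-27) := by
  simp only [polyE, map_pow, s.hgH, map_mul, map_ofNat, map_neg]
  ring

theorem gpull_Δ : s.gpull s.Δ = s.polyE (s.Δ + 30 * s.H ^ 2) (-27 * s.H) 6 0 := by
  simp only [polyE, map_add, map_mul, map_pow, map_ofNat, map_neg, map_zero]
  linear_combination s.hseq2b + s.hgH * (4 * s.πpull s.H - 2 * s.E) + s.hc2P

end PullbackComputationSetup

open PullbackComputationSetup in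
/-- `f*H = 7H`, `f*H² = 4H² + 45Δ`, `f*Δ = 31Δ`, `f*H³ = 28H³`, where
`f*α = π_*(g*α)`. -/
theorem fstar_on_cohomology (s : PullbackComputationSetup) :
    s.πpush (s.gpull s.H) = 7 * s.H ∧
    s.πpush (s.gpull (s.H ^ 2)) = 4 * s.H ^ 2 + 45 * s.Δ ∧
    s.πpush (s.gpull s.Δ) = 31 * s.Δ ∧
    s.πpush (s.gpull (s.H ^ 3)) = 28 * s.H ^ 3 := by
  refine ⟨?_, ?_, ?_, ?_⟩
  · rw [gpull_H, πpush_polyE]; ring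
  · rw [gpull_H_sq, πpush_polyE]; ring
  · rw [gpull_Δ, πpush_polyE]; ring
  · rw [gpull_H_cube, πpush_polyE]
    linear_combination 18 * s.twelve_mul_H_mul_Δ
end
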